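/- Let ρ_1, ρ_2 be positive definite Hermitian matrices on a finite-dimensional complex inner product space. Then the function t ↦ log Tr[ρ_1^t ρ_2^{1−t}] is convex on [0,1]. -/

import Mathlib

/-!
Diagonalise `ρ₁ = U diag(a) Uᴴ` and `ρ₂ = V diag(b) Vᴴ`. Then
`Tr[ρ₁^t ρ₂^{1-t}] = ∑ᵢⱼ |(Uᴴ V)ᵢⱼ|² aᵢ^t bⱼ^{1-t} = ∑ᵢⱼ cᵢⱼ rᵢⱼ^t` with `cᵢⱼ ≥ 0` and `rᵢⱼ = aᵢ / bⱼ > 0`.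
Each term `t ↦ c r^t` is log-affine, and by Hölder's inequality
`∑ f^θ g^{1-θ} ≤ (∑ f)^θ (∑ g)^{1-θ}` a sum of log-convex functions is log-convex.
-/

open Matrix
open scoped ComplexOrder

noncomputable section

variable {n : Type*} [Fintype n] [DecidableEq n]

/-- Real power of a positive matrix via the continuous functional calculus. -/
def mpow (A : Matrix n n ℂ) (t : ℝ) : Matrix n n ℂ := cfc (fun x : ℝ => x ^ t) A

namespace Real

open Finset

theorem rpow_mul_rpow_one_sub {x y : ℝ} (hx : 0 ≤ x) (hy : 0 < y) (t : ℝ) :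
    x ^ t * y ^ (1 - t) = y * (x / y) ^ t := by
  rw [div_rpow hx hy.le, rpow_sub hy, rpow_one]
  field_simp

theorem mul_rpow_mul_add_mul_of_add_eq_one {c r a b : ℝ} (hc : 0 ≤ c) (hr : 0 < r)
    (hab : a + b = 1) (s t : ℝ) :
    c * r ^ (a * s + b * t) = (c * r ^ s) ^ a * (c * r ^ t) ^ b := by
  have hc_split : c = c ^ a * c ^ b := by
    rw [← rpow_add' hc (by rw [hab]; exact one_ne_zero), hab, rpow_one]
  rw [mul_rpow hc (rpow_nonneg hr.le _), mul_rpow hc (rpow_nonneg hr.le _), ← rpow_mul hr.le,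
    ← rpow_mul hr.le, rpow_add hr, mul_comm s, mul_comm t]
  nth_rw 1 [hc_split]
  ring

theorem sum_rpow_mul_rpow_le_rpow_sum_mul_rpow_sum {ι : Type*} (s : Finset ι) {f g : ι → ℝ}
    (hf : ∀ i ∈ s, 0 ≤ f i) (hg : ∀ i ∈ s, 0 ≤ g i) {a b : ℝ} (ha : 0 < a) (hb : 0 < b)
    (hab : a + b = 1) :
    ∑ i ∈ s, f i ^ a * g i ^ b ≤ (∑ i ∈ s, f i) ^ a * (∑ i ∈ s, g i) ^ b := by
  have holder := inner_le_Lp_mul_Lq_of_nonneg s (HolderConjugate.inv_inv ha hb hab)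
    (fun i hi => rpow_nonneg (hf i hi) a) (fun i hi => rpow_nonneg (hg i hi) b)
  have hf_sum : ∑ i ∈ s, (f i ^ a) ^ a⁻¹ = ∑ i ∈ s, f i :=
    sum_congr rfl fun i hi => rpow_rpow_inv (hf i hi) ha.ne'
  have hg_sum : ∑ i ∈ s, (g i ^ b) ^ b⁻¹ = ∑ i ∈ s, g i :=
    sum_congr rfl fun i hi => rpow_rpow_inv (hg i hi) hb.ne'
  simpa only [one_div, inv_inv, hf_sum, hg_sum] using holder

theorem convexOn_log_sum_mul_rpow {ι : Type*} (s : Finset ι) {c r : ι → ℝ}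
    (hc : ∀ i ∈ s, 0 ≤ c i) (hr : ∀ i ∈ s, 0 < r i) :
    ConvexOn ℝ Set.univ fun t : ℝ => log (∑ i ∈ s, c i * r i ^ t) := by
  by_cases hc_zero : ∀ i ∈ s, c i = 0
  -- the sum vanishes identically, and `log 0 = 0`
  · have hsum_zero : ∀ t : ℝ, ∑ i ∈ s, c i * r i ^ t = 0 := fun t =>
      sum_eq_zero fun i hi => by rw [hc_zero i hi, zero_mul]
    simpa only [hsum_zero, log_zero] using convexOn_const (0 : ℝ) convex_univ
  push Not at hc_zero
  obtain ⟨j, hj, hcj⟩ := hc_zero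
  have hterm : ∀ t : ℝ, ∀ i ∈ s, 0 ≤ c i * r i ^ t := fun t i hi =>
    mul_nonneg (hc i hi) (rpow_nonneg (hr i hi).le t)
  have hsum_pos : ∀ t : ℝ, 0 < ∑ i ∈ s, c i * r i ^ t := fun t =>
    sum_pos' (hterm t) ⟨j, hj, mul_pos ((hc j hj).lt_of_ne' hcj) (rpow_pos_of_pos (hr j hj) t)⟩
  refine ⟨convex_univ, fun x _ y _ a b ha hb hab => ?_⟩
  rcases ha.eq_or_lt with rfl | ha
  · simp_all
  rcases hb.eq_or_lt with rfl | hb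
  · simp_all
  have hmul : ∑ i ∈ s, c i * r i ^ (a * x + b * y)
      ≤ (∑ i ∈ s, c i * r i ^ x) ^ a * (∑ i ∈ s, c i * r i ^ y) ^ b := calc
    _ = ∑ i ∈ s, (c i * r i ^ x) ^ a * (c i * r i ^ y) ^ b :=
      sum_congr rfl fun i hi => mul_rpow_mul_add_mul_of_add_eq_one (hc i hi) (hr i hi) hab x y
    _ ≤ _ := sum_rpow_mul_rpow_le_rpow_sum_mul_rpow_sum s (hterm x) (hterm y) ha hb hab
  calc log (∑ i ∈ s, c i * r i ^ (a • x + b • y))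
      ≤ log ((∑ i ∈ s, c i * r i ^ x) ^ a * (∑ i ∈ s, c i * r i ^ y) ^ b) :=
        log_le_log (hsum_pos _) hmul
    _ = a • log (∑ i ∈ s, c i * r i ^ x) + b • log (∑ i ∈ s, c i * r i ^ y) := by
      rw [log_mul (rpow_pos_of_pos (hsum_pos x) a).ne' (rpow_pos_of_pos (hsum_pos y) b).ne',
        log_rpow (hsum_pos x), log_rpow (hsum_pos y), smul_eq_mul, smul_eq_mul]

end Real

namespace Matrix

variable {𝕜 : Type*} [RCLike 𝕜]

theorem trace_diagonal_mul_mul_diagonal_mul_conjTranspose (W : Matrix n n 𝕜) (d e : n → 𝕜) :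
    (diagonal d * W * diagonal e * Wᴴ).trace = ∑ i, ∑ j, d i * e j * (‖W i j‖ ^ 2 : ℝ) := by
  simp only [trace, diag, mul_apply (M := diagonal d * W * diagonal e), mul_diagonal,
    diagonal_mul, conjTranspose_apply, RCLike.star_def]
  refine Finset.sum_congr rfl fun i _ => Finset.sum_congr rfl fun j _ => ?_
  rw [RCLike.ofReal_pow, ← RCLike.mul_conj]
  ring

theorem trace_conj_diagonal_mul_conj_diagonal (U V : Matrix n n 𝕜) (d e : n → 𝕜) :
    (U * diagonal d * Uᴴ * (V * diagonal e * Vᴴ)).trace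
      = ∑ i, ∑ j, d i * e j * (‖(Uᴴ * V) i j‖ ^ 2 : ℝ) := by
  rw [← trace_diagonal_mul_mul_diagonal_mul_conjTranspose, conjTranspose_mul,
    conjTranspose_conjTranspose, Matrix.mul_assoc, Matrix.mul_assoc, trace_mul_comm]
  simp only [Matrix.mul_assoc]

theorem IsHermitian.trace_cfc_mul_cfc {A B : Matrix n n 𝕜} (hA : A.IsHermitian)
    (hB : B.IsHermitian) (f g : ℝ → ℝ) :
    (cfc f A * cfc g B).trace = ∑ i, ∑ j, ((f (hA.eigenvalues i) * g (hB.eigenvalues j) *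
      ‖((hA.eigenvectorUnitary : Matrix n n 𝕜)ᴴ * hB.eigenvectorUnitary) i j‖ ^ 2 : ℝ) : 𝕜) := by
  rw [hA.cfc_eq, hB.cfc_eq, IsHermitian.cfc, IsHermitian.cfc, Unitary.conjStarAlgAut_apply,
    Unitary.conjStarAlgAut_apply, star_eq_conjTranspose, star_eq_conjTranspose,
    trace_conj_diagonal_mul_conj_diagonal]
  push_cast
  rfl

end Matrix

/-- **Convexity of `t ↦ log Tr[ρ₁^t ρ₂^{1−t}]`.**  For positive definite Hermitian matrices
`ρ₁, ρ₂`, the function `t ↦ log Tr[ρ₁^t ρ₂^{1−t}]` is convex on `[0,1]`. -/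
theorem psi_convexOn (ρ₁ ρ₂ : Matrix n n ℂ) (hρ₁ : ρ₁.PosDef) (hρ₂ : ρ₂.PosDef) :
    ConvexOn ℝ (Set.Icc (0 : ℝ) 1)
      (fun t => Real.log ((mpow ρ₁ t * mpow ρ₂ (1 - t)).trace.re)) := by
  set a := hρ₁.isHermitian.eigenvalues
  set b := hρ₂.isHermitian.eigenvalues
  set W := (hρ₁.isHermitian.eigenvectorUnitary : Matrix n n ℂ)ᴴ *
    hρ₂.isHermitian.eigenvectorUnitary
  have htrace : ∀ t : ℝ, (mpow ρ₁ t * mpow ρ₂ (1 - t)).trace.re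
      = ∑ p : n × n, ‖W p.1 p.2‖ ^ 2 * b p.2 * (a p.1 / b p.2) ^ t := by
    intro t
    rw [mpow, mpow, hρ₁.isHermitian.trace_cfc_mul_cfc hρ₂.isHermitian, Fintype.sum_prod_type,
      Complex.re_sum]
    refine Finset.sum_congr rfl fun i _ => ?_
    rw [Complex.re_sum]
    refine Finset.sum_congr rfl fun j _ => ?_
    rw [← RCLike.re_to_complex, RCLike.ofReal_re,
      Real.rpow_mul_rpow_one_sub (hρ₁.eigenvalues_pos i).le (hρ₂.eigenvalues_pos j)]
    ring
  simp only [htrace]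
  exact (Real.convexOn_log_sum_mul_rpow _
    (fun p _ => mul_nonneg (sq_nonneg _) (hρ₂.eigenvalues_pos p.2).le)
    (fun p _ => div_pos (hρ₁.eigenvalues_pos p.1) (hρ₂.eigenvalues_pos p.2))).subset
    (Set.subset_univ _) (convex_Icc 0 1)

end
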